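/- Let G be a finite abelian group with free presentation 1 → R → F → G → 1 where F is the free group on generators x_1, ..., x_t mapping to generators of the cyclic factors of G of orders r_1, ..., r_t, R = S·γ_2(F), and S is the normal closure of {x_1^{r_1}, ..., x_t^{r_t}} in F. Then for all c ≥ 1, N_cM(G) ≅ γ_{c+1}(F) / (ρ_{c+1}(S)·γ_{c+2}(F)). -/

import Mathlib

/-- `[R, F, …, F]` with `n` copies of `F`: `iterComm R 0 = R`,
`iterComm R (n+1) = [iterComm R n, F]`. -/
def iterComm {F : Type*} [Group F] (R : Subgroup F) : ℕ → Subgroup F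
  | 0 => R
  | n + 1 => ⁅iterComm R n, (⊤ : Subgroup F)⁆

theorem iterComm_normal {F : Type*} [Group F] (R : Subgroup F) [h : R.Normal] :
    ∀ n, (iterComm R n).Normal
  | 0 => h
  | n + 1 => by
      haveI := iterComm_normal R n
      exact Subgroup.commutator_normal _ _

/-- The `c`-nilpotent multiplier relative to a free presentation with kernel `R`
inside the free group `F`:
`𝒩_c M = (R ⊓ γ_{c+1}(F)) / [R, F, …, F]` (`c` copies of `F`).
Note `γ_{c+1}(F) = lowerCentralSeries F c` in Mathlib's indexing. -/
def ncMType {F : Type*} [Group F] (R : Subgroup F) (c : ℕ) : Type _ :=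
  (R ⊓ (⊤ : Subgroup F).lowerCentralSeries c : Subgroup F) ⧸
    ((iterComm R c).subgroupOf (R ⊓ (⊤ : Subgroup F).lowerCentralSeries c))

noncomputable instance {F : Type*} [Group F] (R : Subgroup F) [R.Normal] (c : ℕ) :
    Group (ncMType R c) := by
  haveI : ((iterComm R c).subgroupOf (R ⊓ (⊤ : Subgroup F).lowerCentralSeries c)).Normal :=
    Subgroup.Normal.subgroupOf (iterComm_normal R c) _
  exact QuotientGroup.Quotient.group _

/-- `S`: the normal closure of `{x₁^{r₁}, …, x_t^{r_t}}` in the free group on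
`x₁, …, x_t`. -/
def Sgrp (t : ℕ) (r : Fin t → ℕ) : Subgroup (FreeGroup (Fin t)) :=
  Subgroup.normalClosure (Set.range fun i => FreeGroup.of i ^ r i)

/-- The quotient `γ_{c+1}(F) / (ρ_{c+1}(S)·γ_{c+2}(F))`; recall
`γ_n(F) = lowerCentralSeries F (n-1)` and `ρ_{c+1}(S) = iterComm S c`. -/
def QType (t : ℕ) (r : Fin t → ℕ) (c : ℕ) : Type :=
  ((⊤ : Subgroup (FreeGroup (Fin t))).lowerCentralSeries c : Subgroup (FreeGroup (Fin t))) ⧸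
    ((iterComm (Sgrp t r) c ⊔ (⊤ : Subgroup (FreeGroup (Fin t))).lowerCentralSeries (c + 1)).subgroupOf
      ((⊤ : Subgroup (FreeGroup (Fin t))).lowerCentralSeries c))

noncomputable instance (t : ℕ) (r : Fin t → ℕ) (c : ℕ) : Group (QType t r c) := by
  haveI : (Sgrp t r).Normal := Subgroup.normalClosure_normal
  haveI : (iterComm (Sgrp t r) c).Normal := iterComm_normal _ c
  haveI : ((iterComm (Sgrp t r) c ⊔
      (⊤ : Subgroup (FreeGroup (Fin t))).lowerCentralSeries (c + 1)).subgroupOf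
      ((⊤ : Subgroup (FreeGroup (Fin t))).lowerCentralSeries c)).Normal :=
    Subgroup.Normal.subgroupOf inferInstance _
  exact QuotientGroup.Quotient.group _

/-!
Since `G` is abelian, `R = S·γ₂(F)` contains `γ_{c+1}(F)`, so `R ∩ γ_{c+1}(F) = γ_{c+1}(F)`.
For normal subgroups, commutation with `F` distributes over products, hence
`[S·γ₂(F), F, …, F] = ρ_{c+1}(S)·γ_{c+2}(F)`, and the two quotients coincide.
-/

/-- Modulo the right-hand side, `H` and `K`, hence `H ⊔ K`, centralize the image of `L`. -/
theorem Subgroup.commutator_sup_left {G : Type*} [Group G] (H K L : Subgroup G)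
    [H.Normal] [K.Normal] [L.Normal] : ⁅H ⊔ K, L⁆ = ⁅H, L⁆ ⊔ ⁅K, L⁆ := by
  refine le_antisymm ?_ (sup_le (commutator_mono le_sup_left le_rfl)
    (commutator_mono le_sup_right le_rfl))
  set φ := QuotientGroup.mk' (⁅H, L⁆ ⊔ ⁅K, L⁆)
  have commutator_le_iff (X : Subgroup G) :
      ⁅X, L⁆ ≤ ⁅H, L⁆ ⊔ ⁅K, L⁆ ↔ X.map φ ≤ centralizer (L.map φ) := by
    rw [← commutator_eq_bot_iff_le_centralizer, ← map_commutator, map_eq_bot_iff,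
      QuotientGroup.ker_mk']
  rw [commutator_le_iff, map_sup]
  exact sup_le ((commutator_le_iff H).mp le_sup_left) ((commutator_le_iff K).mp le_sup_right)

attribute [local instance] iterComm_normal

theorem iterComm_sup {F : Type*} [Group F] (S T : Subgroup F) [S.Normal] [T.Normal] :
    ∀ n, iterComm (S ⊔ T) n = iterComm S n ⊔ iterComm T n
  | 0 => rfl
  | n + 1 => by
      simp only [iterComm]
      rw [iterComm_sup S T n, Subgroup.commutator_sup_left]

theorem iterComm_lowerCentralSeries {F : Type*} [Group F] (k : ℕ) :
    ∀ n, iterComm ((⊤ : Subgroup F).lowerCentralSeries k) n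
      = (⊤ : Subgroup F).lowerCentralSeries (k + n)
  | 0 => rfl
  | n + 1 => by
      rw [iterComm, iterComm_lowerCentralSeries k n, ← add_assoc,
        Subgroup.lowerCentralSeries_succ]

def quotientSubgroupOfCongr {G : Type*} [Group G] {H H' N N' : Subgroup G}
    [N.Normal] [N'.Normal] (hH : H = H') (hN : N = N') :
    H ⧸ N.subgroupOf H ≃* H' ⧸ N'.subgroupOf H' := by
  subst hH hN
  exact MulEquiv.refl _

instance Sgrp_normal (t : ℕ) (r : Fin t → ℕ) : (Sgrp t r).Normal :=
  Subgroup.normalClosure_normal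

theorem ncM_eq_gamma_quotient_general (t : ℕ) (r : Fin t → ℕ)
    (c : ℕ) (hc : 1 ≤ c)
    (π : FreeGroup (Fin t) →* Multiplicative (∀ i, ZMod (r i)))
    (hker : π.ker = Sgrp t r ⊔ (⊤ : Subgroup (FreeGroup (Fin t))).lowerCentralSeries 1) :
    Nonempty (ncMType π.ker c ≃* QType t r c) := by
  have hγ : (⊤ : Subgroup (FreeGroup (Fin t))).lowerCentralSeries c ≤ π.ker :=
    hker ▸ (Subgroup.lowerCentralSeries_antitone _ hc).trans le_sup_right
  have hρ : iterComm π.ker c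
      = iterComm (Sgrp t r) c ⊔ (⊤ : Subgroup (FreeGroup (Fin t))).lowerCentralSeries (c + 1) := by
    rw [hker, iterComm_sup, iterComm_lowerCentralSeries, add_comm]
  exact ⟨quotientSubgroupOfCongr (inf_eq_right.mpr hγ) hρ⟩

/-- For the standard free presentation of a finite abelian group
`G = ℤ/r₁ ⊕ ⋯ ⊕ ℤ/r_t` with `F` free on `x₁, …, x_t`, kernel
`R = S·γ₂(F)` where `S = ⟨x_i^{r_i}⟩^F`, one has for all `c ≥ 1`:
`𝒩_c M(G) ≅ γ_{c+1}(F)/(ρ_{c+1}(S)·γ_{c+2}(F))`. -/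
theorem ncM_eq_gamma_quotient (t : ℕ) (r : Fin t → ℕ) (hr : ∀ i, 0 < r i)
    (c : ℕ) (hc : 1 ≤ c)
    (π : FreeGroup (Fin t) →* Multiplicative (∀ i, ZMod (r i)))
    (hgen : ∀ i, π (FreeGroup.of i) = Multiplicative.ofAdd (Pi.single i 1))
    (hπ : Function.Surjective π)
    (hker : π.ker = Sgrp t r ⊔ (⊤ : Subgroup (FreeGroup (Fin t))).lowerCentralSeries 1) :
    Nonempty (ncMType π.ker c ≃* QType t r c) :=
  ncM_eq_gamma_quotient_general t r c hc π hker
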